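/- Theorem (soundness and completeness for T_rec): for every signature S, the axiom system AX_rec(S) is sound and complete for the language L_uniq(S) with respect to the class T_rec(S) of recursive causal models; that is, a formula of L_uniq(S) is provable in AX_rec(S) if and only if it is true in every recursive causal model over S. -/

import Mathlib

/-- A signature `S = (U, V, R)`: finite (disjoint) sets of exogenous variables `U` and
endogenous variables `V`, together with a nonempty finite set (here: type) of possible
values for each variable. -/
structure Signature where
  U : Type
  V : Type
  uFin : Fintype U
  vFin : Fintype V
  vDecEq : DecidableEq V
  valU : U → Type
  valV : V → Type
  valUFin : ∀ u, Fintype (valU u)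
  valVFin : ∀ X, Fintype (valV X)
  valUNonempty : ∀ u, Nonempty (valU u)
  valVNonempty : ∀ X, Nonempty (valV X)

attribute [instance] Signature.uFin Signature.vFin Signature.vDecEq
  Signature.valUFin Signature.valVFin Signature.valUNonempty Signature.valVNonempty

/-- The standing assumption `|R(Y)| ≥ 2` for every variable `Y`. -/
def Signature.Standard (S : Signature) : Prop :=
  (∀ u, 2 ≤ Fintype.card (S.valU u)) ∧ (∀ X, 2 ≤ Fintype.card (S.valV X))

/-- A setting `u⃗` of values for all the exogenous variables. -/
abbrev Signature.Context (S : Signature) : Type := ∀ u : S.U, S.valU u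

/-- An assignment of values to all the endogenous variables. -/
abbrev Signature.Assignment (S : Signature) : Type := ∀ X : S.V, S.valV X

/-- An intervention `X⃗ ← x⃗`: a vector of distinct endogenous variables together with
values for them, encoded as a partial assignment. -/
abbrev Signature.Intervention (S : Signature) : Type := ∀ X : S.V, Option (S.valV X)

/-- The empty intervention (`[true]`). -/
def Signature.emptyInt (S : Signature) : S.Intervention := fun _ => none

/-- Extend an intervention by additionally setting `W` to `w`. -/
def intUpdate {S : Signature} (g : S.Intervention) (W : S.V) (w : S.valV W) :
    S.Intervention :=
  fun X => if h : X = W then some (cast (congrArg S.valV h).symm w) else g X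

/-- A causal model `T = (S, F)` over the signature `S`. -/
structure CausalModel (S : Signature) where
  F : ∀ X : S.V, S.Context → (∀ Y : S.V, Y ≠ X → S.valV Y) → S.valV X

/-- `v` is a solution of `T_{X⃗ ← x⃗}(u⃗)` (intervention encoded by `g`): intervened
variables take their set values, and every other variable satisfies its equation. -/
def CausalModel.IsSolution {S : Signature} (T : CausalModel S) (g : S.Intervention)
    (u : S.Context) (v : S.Assignment) : Prop :=
  ∀ X : S.V,
    (∀ x, g X = some x → v X = x) ∧
    (g X = none → v X = T.F X u fun Y _ => v Y)

/-- `T ∈ T_uniq(S)`: the equations of `T_{X⃗ ← x⃗}(u⃗)` have a unique solution, for every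
intervention and every context. -/
def CausalModel.UniqueSolutions {S : Signature} (T : CausalModel S) : Prop :=
  ∀ (g : S.Intervention) (u : S.Context), ∃! v : S.Assignment, T.IsSolution g u v

/-- `T ∈ T_rec(S)`: there is a (strict) total order `≺` on `V` such that `F_X` is
independent of the value of `Y` whenever `X ≺ Y`. -/
def CausalModel.Recursive {S : Signature} (T : CausalModel S) : Prop :=
  ∃ r : S.V → S.V → Prop, IsStrictTotalOrder S.V r ∧
    ∀ (X : S.V) (u : S.Context) (w w' : ∀ Y : S.V, Y ≠ X → S.valV Y),
      (∀ (Y : S.V) (h : Y ≠ X), ¬ r X Y → w Y h = w' Y h) →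
      T.F X u w = T.F X u w'

/-- Boolean combinations of atoms of the form `X(u⃗) = x`. -/
inductive IForm (S : Signature) : Type where
  | atom : (X : S.V) → S.Context → S.valV X → IForm S
  | not : IForm S → IForm S
  | and : IForm S → IForm S → IForm S
  | or : IForm S → IForm S → IForm S

namespace IForm

variable {S : Signature}

/-- The settings `u⃗` of the exogenous variables mentioned in a formula. -/
def mentions : IForm S → Set S.Context
  | atom _ u _ => {u}
  | not φ => φ.mentions
  | and φ ψ => φ.mentions ∪ ψ.mentions
  | or φ ψ => φ.mentions ∪ ψ.mentions

/-- The endogenous variables appearing in a formula. -/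
def vars : IForm S → Set S.V
  | atom X _ _ => {X}
  | not φ => φ.vars
  | and φ ψ => φ.vars ∪ ψ.vars
  | or φ ψ => φ.vars ∪ ψ.vars

/-- Evaluate a Boolean combination of atoms, where the atoms mentioning `u⃗` are
evaluated in the assignment `σ u⃗`. -/
def eval (σ : S.Context → S.Assignment) : IForm S → Prop
  | atom X u x => σ u X = x
  | not φ => ¬ φ.eval σ
  | and φ ψ => φ.eval σ ∧ ψ.eval σ
  | or φ ψ => φ.eval σ ∨ ψ.eval σ

def imp (φ ψ : IForm S) : IForm S := or (not φ) ψ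

/-- `φ ∧ ψ₁ ∧ … ∧ ψₙ`. -/
def conj (φ : IForm S) : List (IForm S) → IForm S
  | [] => φ
  | ψ :: l => and φ (conj ψ l)

/-- `φ ∨ ψ₁ ∨ … ∨ ψₙ`. -/
def disj (φ : IForm S) : List (IForm S) → IForm S
  | [] => φ
  | ψ :: l => or φ (disj ψ l)

/-- Evaluation under an arbitrary truth assignment to the atoms. -/
def pEval (val : ∀ X : S.V, S.Context → S.valV X → Prop) : IForm S → Prop
  | atom X u x => val X u x
  | not φ => ¬ φ.pEval val
  | and φ ψ => φ.pEval val ∧ ψ.pEval val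
  | or φ ψ => φ.pEval val ∨ ψ.pEval val

/-- An instance of a propositional tautology. -/
def Tautology (φ : IForm S) : Prop := ∀ val, φ.pEval val

theorem mentions_nonempty : ∀ φ : IForm S, φ.mentions.Nonempty
  | atom _ u _ => ⟨u, rfl⟩
  | not φ => mentions_nonempty φ
  | and φ _ => (mentions_nonempty φ).imp fun _ h => Set.mem_union_left _ h
  | or φ _ => (mentions_nonempty φ).imp fun _ h => Set.mem_union_left _ h

end IForm

/-- `T ⊨ [X⃗ ← x⃗] φ` : for every choice, for each mentioned setting `u⃗`, of a solution
of `T_{X⃗ ← x⃗}(u⃗)`, the formula `φ` evaluates to true. -/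
def CausalModel.boxSat {S : Signature} (T : CausalModel S) (g : S.Intervention)
    (φ : IForm S) : Prop :=
  ∀ σ : S.Context → S.Assignment,
    (∀ u ∈ φ.mentions, T.IsSolution g u (σ u)) → φ.eval σ

/-- The language `L⁺(S)`: Boolean combinations of basic causal formulas `[Y⃗ ← y⃗] φ`. -/
inductive LPlus (S : Signature) : Type where
  | box : S.Intervention → IForm S → LPlus S
  | not : LPlus S → LPlus S
  | and : LPlus S → LPlus S → LPlus S
  | or : LPlus S → LPlus S → LPlus S

namespace LPlus

variable {S : Signature}

/-- Truth of a causal formula in a causal model. -/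
def sat : LPlus S → CausalModel S → Prop
  | box g φ, T => T.boxSat g φ
  | not φ, T => ¬ φ.sat T
  | and φ ψ, T => φ.sat T ∧ ψ.sat T
  | or φ ψ, T => φ.sat T ∨ ψ.sat T

/-- `⟨X⃗ ← x⃗⟩ φ` abbreviates `¬ [X⃗ ← x⃗] ¬ φ`. -/
def dia (g : S.Intervention) (φ : IForm S) : LPlus S := not (box g (IForm.not φ))

def imp (φ ψ : LPlus S) : LPlus S := or (not φ) ψ

def iff (φ ψ : LPlus S) : LPlus S := and (imp φ ψ) (imp ψ φ)

def conj (φ : LPlus S) : List (LPlus S) → LPlus S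
  | [] => φ
  | ψ :: l => and φ (conj ψ l)

def disj (φ : LPlus S) : List (LPlus S) → LPlus S
  | [] => φ
  | ψ :: l => or φ (disj ψ l)

/-- Membership in the sublanguage `L_uniq(S)`: Boolean combinations of formulas of the
form `[Y⃗ ← y⃗](X(u⃗) = x)`. -/
def InLuniq : LPlus S → Prop
  | box _ φ => ∃ (X : S.V) (u : S.Context) (x : S.valV X), φ = IForm.atom X u x
  | not φ => φ.InLuniq
  | and φ ψ => φ.InLuniq ∧ ψ.InLuniq
  | or φ ψ => φ.InLuniq ∧ ψ.InLuniq

/-- Evaluation under an arbitrary truth assignment to the basic causal formulas. -/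
def pEval (val : S.Intervention → IForm S → Prop) : LPlus S → Prop
  | box g φ => val g φ
  | not φ => ¬ φ.pEval val
  | and φ ψ => φ.pEval val ∧ ψ.pEval val
  | or φ ψ => φ.pEval val ∨ ψ.pEval val

/-- An instance of a propositional tautology. -/
def Tautology (φ : LPlus S) : Prop := ∀ val, φ.pEval val

/-- The endogenous variables appearing in a causal formula (including the variables
set by its interventions). -/
def vars : LPlus S → Set S.V
  | box g φ => {X | g X ≠ none} ∪ φ.vars
  | not φ => φ.vars
  | and φ ψ => φ.vars ∪ ψ.vars
  | or φ ψ => φ.vars ∪ ψ.vars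

/-- The settings of the exogenous variables mentioned in a causal formula. -/
def contexts : LPlus S → Set S.Context
  | box _ φ => φ.mentions
  | not φ => φ.contexts
  | and φ ψ => φ.contexts ∪ ψ.contexts
  | or φ ψ => φ.contexts ∪ ψ.contexts

theorem contexts_nonempty : ∀ φ : LPlus S, φ.contexts.Nonempty
  | box _ φ => φ.mentions_nonempty
  | not φ => contexts_nonempty φ
  | and φ _ => (contexts_nonempty φ).imp fun _ h => Set.mem_union_left _ h
  | or φ _ => (contexts_nonempty φ).imp fun _ h => Set.mem_union_left _ h

end LPlus

/-- `Y` affects `Z` in `T`: for some setting of the exogenous variables and of some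
other endogenous variables, changing the value of `Y` changes the value of `Z`. -/
def CausalModel.Affects {S : Signature} (T : CausalModel S) (Y Z : S.V) : Prop :=
  Y ≠ Z ∧ ∃ (g : S.Intervention) (y : S.valV Y) (u : S.Context) (z z' : S.valV Z),
    g Y = none ∧ g Z = none ∧ z ≠ z' ∧
    T.boxSat (intUpdate g Y y) (IForm.atom Z u z') ∧ T.boxSat g (IForm.atom Z u z)

/-- Provability from a set of axioms using modus ponens. -/
inductive Provable {S : Signature} (Ax : Set (LPlus S)) : LPlus S → Prop
  | ax : ∀ {φ}, φ ∈ Ax → Provable Ax φ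
  | mp : ∀ {φ ψ}, Provable Ax (φ.imp ψ) → Provable Ax φ → Provable Ax ψ

/-! ### The axiom system `AX_uniq(S)` / `AX_rec(S)` for the language `L_uniq(S)` -/

/-- C0: all instances of propositional tautologies (in the language `L_uniq(S)`). -/
def C0Ax (S : Signature) : Set (LPlus S) := {φ | φ.Tautology ∧ φ.InLuniq}

/-- C1 (equality): `X_{y⃗}(u⃗) = x ⇒ ¬(X_{y⃗}(u⃗) = x')` for distinct `x, x'`. -/
def C1Ax (S : Signature) : Set (LPlus S) :=
  {φ | ∃ (g : S.Intervention) (X : S.V) (u : S.Context) (x x' : S.valV X),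
    x ≠ x' ∧
    φ = (LPlus.box g (IForm.atom X u x)).imp (LPlus.not (LPlus.box g (IForm.atom X u x')))}

/-- C2 (definiteness): `∨_{x ∈ R(X)} X_{y⃗}(u⃗) = x`. -/
def C2Ax (S : Signature) : Set (LPlus S) :=
  {φ | ∃ (g : S.Intervention) (X : S.V) (u : S.Context) (x : S.valV X) (l : List (S.valV X)),
    (x :: l).Nodup ∧ (∀ y : S.valV X, y ∈ x :: l) ∧
    φ = (LPlus.box g (IForm.atom X u x)).disj (l.map fun y => LPlus.box g (IForm.atom X u y))}

/-- C3 (composition): `(W_{x⃗}(u⃗) = w ∧ Y_{x⃗}(u⃗) = y) ⇒ Y_{x⃗w}(u⃗) = y`. -/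
def C3Ax (S : Signature) : Set (LPlus S) :=
  {φ | ∃ (g : S.Intervention) (W Y : S.V) (u : S.Context) (w : S.valV W) (y : S.valV Y),
    g W = none ∧ g Y = none ∧ W ≠ Y ∧
    φ = (LPlus.and (LPlus.box g (IForm.atom W u w)) (LPlus.box g (IForm.atom Y u y))).imp
          (LPlus.box (intUpdate g W w) (IForm.atom Y u y))}

/-- C4 (effectiveness): `X_{x w⃗}(u⃗) = x` where `X` is one of the set variables. -/
def C4Ax (S : Signature) : Set (LPlus S) :=
  {φ | ∃ (g : S.Intervention) (X : S.V) (u : S.Context) (x : S.valV X),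
    g X = some x ∧ φ = LPlus.box g (IForm.atom X u x)}

/-- C5 (reversibility): `(Y_{x⃗w}(u⃗) = y ∧ W_{x⃗y}(u⃗) = w) ⇒ Y_{x⃗}(u⃗) = y`. -/
def C5Ax (S : Signature) : Set (LPlus S) :=
  {φ | ∃ (g : S.Intervention) (W Y : S.V) (u : S.Context) (w : S.valV W) (y : S.valV Y),
    g W = none ∧ g Y = none ∧ W ≠ Y ∧
    φ = (LPlus.and (LPlus.box (intUpdate g W w) (IForm.atom Y u y))
                   (LPlus.box (intUpdate g Y y) (IForm.atom W u w))).imp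
          (LPlus.box g (IForm.atom Y u y))}

/-- A single disjunct `Z_{x⃗y}(u⃗) = z' ∧ Z_{x⃗}(u⃗) = z` (with `z ≠ z'`) of the
formula `Y ⤳ Z`. -/
def AffDisjunct (S : Signature) (Y Z : S.V) (φ : LPlus S) : Prop :=
  ∃ (g : S.Intervention) (y : S.valV Y) (u : S.Context) (z z' : S.valV Z),
    g Y = none ∧ g Z = none ∧ z ≠ z' ∧
    φ = LPlus.and (LPlus.box (intUpdate g Y y) (IForm.atom Z u z'))
                  (LPlus.box g (IForm.atom Z u z))

/-- `φ` is the formula `Y ⤳ Z` (`Y` affects `Z`): the disjunction, over all settings of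
the exogenous variables and of other endogenous variables, of all the disjuncts
`Z_{x⃗y}(u⃗) = z' ∧ Z_{x⃗}(u⃗) = z` with `z ≠ z'`. -/
def IsAffectsFormula (S : Signature) (Y Z : S.V) (φ : LPlus S) : Prop :=
  Y ≠ Z ∧ ∃ (ψ : LPlus S) (l : List (LPlus S)), (ψ :: l).Nodup ∧
    (∀ χ : LPlus S, χ ∈ ψ :: l ↔ AffDisjunct S Y Z χ) ∧ φ = ψ.disj l

/-- C6 (recursiveness): `(X_0 ⤳ X_1 ∧ … ∧ X_{k-1} ⤳ X_k) ⇒ ¬(X_k ⤳ X_0)`. -/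
def C6Ax (S : Signature) : Set (LPlus S) :=
  {φ | ∃ (k : ℕ) (Xs : Fin (k + 2) → S.V) (A : Fin (k + 1) → LPlus S) (B : LPlus S),
    (∀ i : Fin (k + 1), IsAffectsFormula S (Xs i.castSucc) (Xs i.succ) (A i)) ∧
    IsAffectsFormula S (Xs (Fin.last (k + 1))) (Xs 0) B ∧
    φ = ((A 0).conj (List.ofFn A).tail).imp (LPlus.not B)}

/-- The axiom system `AX_uniq(S)`: C0–C5 (with modus ponens as inference rule). -/
def AXuniq (S : Signature) : Set (LPlus S) :=
  C0Ax S ∪ C1Ax S ∪ C2Ax S ∪ C3Ax S ∪ C4Ax S ∪ C5Ax S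

/-- The axiom system `AX_rec(S)`: C0–C4 and C6 (with modus ponens). -/
def AXrec (S : Signature) : Set (LPlus S) :=
  C0Ax S ∪ C1Ax S ∪ C2Ax S ∪ C3Ax S ∪ C4Ax S ∪ C6Ax S

/-!
Both directions go through response functions `f g u`, giving the value of every endogenous
variable under the intervention `g` in the context `u`. Read a valuation of the atoms
`[g] X(u) = x` off `f` as `f g u X = x`. Then C1 and C2 say exactly that the valuation comes from
some `f`; C4 and C3 that `f` is effective and compositional; and, when those hold, C6 says that
the relation "`Y` affects `Z` under `f`" is acyclic.

Soundness: a recursive model has unique solutions, found by recursion along its order. Its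
solution function is effective and compositional. Its affects relation lies inside the order,
so it is acyclic.

Completeness: given such an `f`, extend its affects relation to a strict total order. The
canonical model `F_X(u, w) := f (set every variable but X to w) u X` respects that order, and its
unique solutions are the `f g u`. So every valuation satisfying `AX_rec` is realised by a
recursive model on `L_uniq`, and a Lindenbaum argument turns this into derivability.
-/

theorem Set.Finite.exists_nodup_cons {α : Type*} {s : Set α} (hs : s.Finite)
    (hne : s.Nonempty) : ∃ a l, (a :: l).Nodup ∧ ∀ x, x ∈ a :: l ↔ x ∈ s := by
  obtain ⟨a, l, hl⟩ := List.exists_cons_of_ne_nil (Finset.toList_eq_nil.not.2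
    (Finset.nonempty_iff_ne_empty.1 (hs.toFinset_nonempty.2 hne)))
  refine ⟨a, l, hl ▸ hs.toFinset.nodup_toList, fun x => ?_⟩
  rw [← hl, Finset.mem_toList, hs.mem_toFinset]

namespace Relation

variable {α : Type*} {R : α → α → Prop}

theorem transGen_of_chain {k : ℕ} {Xs : Fin (k + 2) → α}
    (h : ∀ i : Fin (k + 1), R (Xs i.castSucc) (Xs i.succ)) :
    TransGen R (Xs 0) (Xs (Fin.last (k + 1))) := by
  induction k with
  | zero => exact .single (h 0)
  | succ k ih =>
    refine .tail (ih (Xs := fun i => Xs i.castSucc) fun i => ?_) (h (Fin.last (k + 1)))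
    simpa only [Fin.succ_castSucc] using h i.castSucc

theorem exists_chain_of_transGen {a b : α} (h : TransGen R a b) :
    ∃ (k : ℕ) (Xs : Fin (k + 2) → α), Xs 0 = a ∧ Xs (Fin.last (k + 1)) = b ∧
      ∀ i : Fin (k + 1), R (Xs i.castSucc) (Xs i.succ) := by
  induction h with
  | single h => exact ⟨0, ![a, _], rfl, rfl, fun i => by fin_cases i; exact h⟩
  | @tail _ c _ hbc ih =>
    obtain ⟨k, Xs, h0, hlast, hchain⟩ := ih
    refine ⟨k + 1, Fin.snoc Xs c, by simpa using h0, by simp, fun i => ?_⟩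
    induction i using Fin.lastCases with
    | last => simpa [hlast] using hbc
    | cast i => simpa only [Fin.succ_castSucc, Fin.snoc_castSucc] using hchain i

theorem exists_isStrictTotalOrder_of_acyclic (h : ∀ a, ¬ TransGen R a a) :
    ∃ r, IsStrictTotalOrder α r ∧ ∀ a b, R a b → r a b := by
  have : IsPartialOrder α (ReflTransGen R) :=
    { refl := fun _ => .refl
      trans := fun _ _ _ => ReflTransGen.trans
      antisymm := fun a b hab hba => by
        obtain rfl | hab := reflTransGen_iff_eq_or_transGen.1 hab
        · rfl
        obtain rfl | hba := reflTransGen_iff_eq_or_transGen.1 hba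
        · rfl
        exact (h a (hab.trans hba)).elim }
  obtain ⟨s, hs, hle⟩ := extend_partialOrder (ReflTransGen R)
  refine ⟨fun a b => s a b ∧ a ≠ b, ?_, fun a b hab => ⟨hle _ _ (.single hab), ?_⟩⟩
  · exact
      { trichotomous := fun a b hab hba => by_contra fun hne =>
          (hs.total a b).elim (fun h' => hab ⟨h', hne⟩) (fun h' => hba ⟨h', Ne.symm hne⟩)
        irrefl := fun a h => h.2 rfl
        trans := fun a b c hab hbc => ⟨hs.trans _ _ _ hab.1 hbc.1, by
          rintro rfl
          exact hab.2 (hs.antisymm _ _ hab.1 hbc.1)⟩ }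
  · rintro rfl
    exact h a (.single hab)

end Relation

namespace LPlus

variable {S : Signature}

theorem pEval_imp {val : S.Intervention → IForm S → Prop} {φ ψ : LPlus S} :
    (φ.imp ψ).pEval val ↔ (φ.pEval val → ψ.pEval val) := by
  simp only [imp, pEval]
  tauto

theorem pEval_disj {val : S.Intervention → IForm S → Prop} {φ : LPlus S} {l : List (LPlus S)} :
    (φ.disj l).pEval val ↔ ∃ χ ∈ φ :: l, χ.pEval val := by
  induction l generalizing φ with
  | nil => simp [disj]
  | cons ψ l ih => simp [disj, pEval, ih]

theorem pEval_conj {val : S.Intervention → IForm S → Prop} {φ : LPlus S} {l : List (LPlus S)} :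
    (φ.conj l).pEval val ↔ ∀ χ ∈ φ :: l, χ.pEval val := by
  induction l generalizing φ with
  | nil => simp [conj]
  | cons ψ l ih => simp [conj, pEval, ih]

theorem pEval_conj_ofFn {val : S.Intervention → IForm S → Prop} {k : ℕ}
    {A : Fin (k + 1) → LPlus S} :
    ((A 0).conj (List.ofFn A).tail).pEval val ↔ ∀ i, (A i).pEval val := by
  rw [pEval_conj, List.ofFn_succ, List.tail_cons, ← List.ofFn_succ, List.forall_mem_ofFn_iff]

theorem sat_iff_pEval {T : CausalModel S} {φ : LPlus S} : φ.sat T ↔ φ.pEval T.boxSat := by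
  induction φ with
  | box => rfl
  | not _ ih => simp only [sat, pEval, ih]
  | and _ _ ih ih' | or _ _ ih ih' => simp only [sat, pEval, ih, ih']

theorem pEval_congr {val val' : S.Intervention → IForm S → Prop}
    (h : ∀ g X u x, val g (IForm.atom X u x) ↔ val' g (IForm.atom X u x)) {φ : LPlus S}
    (hφ : φ.InLuniq) : φ.pEval val ↔ φ.pEval val' := by
  induction φ with
  | box g ψ => obtain ⟨X, u, x, rfl⟩ := hφ; exact h g X u x
  | not _ ih => exact not_congr (ih hφ)
  | and _ _ ih ih' => exact and_congr (ih hφ.1) (ih' hφ.2)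
  | or _ _ ih ih' => exact or_congr (ih hφ.1) (ih' hφ.2)

theorem inLuniq_disj {φ : LPlus S} {l : List (LPlus S)} :
    (φ.disj l).InLuniq ↔ ∀ χ ∈ φ :: l, χ.InLuniq := by
  induction l generalizing φ with
  | nil => simp [disj]
  | cons ψ l ih => simp [disj, InLuniq, ih]

theorem inLuniq_conj {φ : LPlus S} {l : List (LPlus S)} :
    (φ.conj l).InLuniq ↔ ∀ χ ∈ φ :: l, χ.InLuniq := by
  induction l generalizing φ with
  | nil => simp [conj]
  | cons ψ l ih => simp [conj, InLuniq, ih]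

end LPlus

section Axioms

variable {S : Signature}

theorem AffDisjunct.inLuniq {Y Z : S.V} {φ : LPlus S} (h : AffDisjunct S Y Z φ) :
    φ.InLuniq := by
  obtain ⟨g, y, u, z, z', -, -, -, rfl⟩ := h
  exact ⟨⟨_, _, _, rfl⟩, ⟨_, _, _, rfl⟩⟩

theorem IsAffectsFormula.inLuniq {Y Z : S.V} {φ : LPlus S} (h : IsAffectsFormula S Y Z φ) :
    φ.InLuniq := by
  obtain ⟨-, ψ, l, -, hmem, rfl⟩ := h
  exact LPlus.inLuniq_disj.2 fun χ hχ => ((hmem χ).1 hχ).inLuniq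

theorem IsAffectsFormula.pEval_iff {Y Z : S.V} {φ : LPlus S}
    {val : S.Intervention → IForm S → Prop} (h : IsAffectsFormula S Y Z φ) :
    φ.pEval val ↔ ∃ χ, AffDisjunct S Y Z χ ∧ χ.pEval val := by
  obtain ⟨-, ψ, l, -, hmem, rfl⟩ := h
  simp only [LPlus.pEval_disj, hmem]

theorem inLuniq_of_mem_AXrec {φ : LPlus S} (h : φ ∈ AXrec S) : φ.InLuniq := by
  rcases h with ((((⟨-, h⟩ | ⟨g, X, u, x, x', -, rfl⟩) | ⟨g, X, u, x, l, -, -, rfl⟩) |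
    ⟨g, W, Y, u, w, y, -, -, -, rfl⟩) | ⟨g, X, u, x, -, rfl⟩) | ⟨k, Xs, A, B, hA, hB, rfl⟩
  · exact h
  · exact ⟨⟨_, _, _, rfl⟩, ⟨_, _, _, rfl⟩⟩
  · refine LPlus.inLuniq_disj.2 fun χ hχ => ?_
    simp only [List.mem_cons, List.mem_map] at hχ
    obtain rfl | ⟨y, -, rfl⟩ := hχ <;> exact ⟨_, _, _, rfl⟩
  · exact ⟨⟨⟨_, _, _, rfl⟩, ⟨_, _, _, rfl⟩⟩, ⟨_, _, _, rfl⟩⟩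
  · exact ⟨_, _, _, rfl⟩
  · refine ⟨LPlus.inLuniq_conj.2 fun χ hχ => ?_, hB.inLuniq⟩
    rw [List.ofFn_succ, List.tail_cons, ← List.ofFn_succ, List.mem_ofFn] at hχ
    obtain ⟨i, rfl⟩ := hχ
    exact (hA i).inLuniq

theorem C0Ax_subset_AXrec : C0Ax S ⊆ AXrec S :=
  fun _ h => Or.inl (Or.inl (Or.inl (Or.inl (Or.inl h))))

theorem exists_isAffectsFormula {Y Z : S.V} (hYZ : Y ≠ Z)
    (h : ∃ χ, AffDisjunct S Y Z χ) : ∃ φ, IsAffectsFormula S Y Z φ := by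
  have hfin : {χ | AffDisjunct S Y Z χ}.Finite := by
    refine (Set.finite_range fun p : S.Intervention × S.valV Y × S.Context × S.valV Z × S.valV Z =>
      LPlus.and (.box (intUpdate p.1 Y p.2.1) (.atom Z p.2.2.1 p.2.2.2.2))
        (.box p.1 (.atom Z p.2.2.1 p.2.2.2.1))).subset ?_
    rintro χ ⟨g, y, u, z, z', -, -, -, rfl⟩
    exact ⟨(g, y, u, z, z'), rfl⟩
  obtain ⟨ψ, l, hnd, hmem⟩ := hfin.exists_nodup_cons h
  exact ⟨_, hYZ, ψ, l, hnd, hmem, rfl⟩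

end Axioms

namespace Provable

variable {S : Signature} {Γ : Set (LPlus S)}

theorem mono {Δ : Set (LPlus S)} (hΓΔ : Γ ⊆ Δ) {φ : LPlus S} (h : Provable Γ φ) :
    Provable Δ φ := by
  induction h with
  | ax hφ => exact ax (hΓΔ hφ)
  | mp _ _ ih ih' => exact mp ih ih'

theorem inLuniq (hΓ : ∀ ψ ∈ Γ, ψ.InLuniq) {φ : LPlus S} (h : Provable Γ φ) : φ.InLuniq := by
  induction h with
  | ax hφ => exact hΓ _ hφ
  | mp _ _ ih _ => exact ih.2

theorem exists_mem_of_sUnion {c : Set (Set (LPlus S))} (hc : IsChain (· ⊆ ·) c) {φ : LPlus S}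
    (h : Provable (⋃₀ c) φ) : ∃ Δ ∈ c, Provable Δ φ := by
  induction h with
  | ax hφ =>
    obtain ⟨Δ, hΔ, hφ⟩ := hφ
    exact ⟨Δ, hΔ, ax hφ⟩
  | mp _ _ ih ih' =>
    obtain ⟨Δ, hΔ, h⟩ := ih
    obtain ⟨Δ', hΔ', h'⟩ := ih'
    obtain hle | hle := hc.total hΔ hΔ'
    · exact ⟨Δ', hΔ', mp (h.mono hle) h'⟩
    · exact ⟨Δ, hΔ, mp h (h'.mono hle)⟩

variable (hC0 : C0Ax S ⊆ Γ) (hΓ : ∀ ψ ∈ Γ, ψ.InLuniq)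
include hC0

theorem of_tautology {φ : LPlus S} (h : φ.Tautology) (hφ : φ.InLuniq) : Provable Γ φ :=
  ax (hC0 ⟨h, hφ⟩)

include hΓ

theorem mp_tautology {φ ψ : LPlus S} (hφ : Provable Γ φ) (hψ : ψ.InLuniq)
    (h : ∀ val, φ.pEval val → ψ.pEval val) : Provable Γ ψ :=
  mp (of_tautology hC0 (fun val => LPlus.pEval_imp.2 (h val)) ⟨hφ.inLuniq hΓ, hψ⟩) hφ

theorem mp_tautology₂ {φ ψ χ : LPlus S} (hφ : Provable Γ φ) (hψ : Provable Γ ψ)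
    (hχ : χ.InLuniq) (h : ∀ val, φ.pEval val → ψ.pEval val → χ.pEval val) : Provable Γ χ :=
  mp (mp_tautology hC0 hΓ hφ ⟨hψ.inLuniq hΓ, hχ⟩ fun val hφ => LPlus.pEval_imp.2 (h val hφ)) hψ

theorem deduction {χ ψ : LPlus S} (hχ : χ.InLuniq) (h : Provable (insert χ Γ) ψ) :
    Provable Γ (χ.imp ψ) := by
  have hins : ∀ ψ ∈ insert χ Γ, ψ.InLuniq := by
    rintro ψ (rfl | hψ)
    exacts [hχ, hΓ ψ hψ]
  induction h with
  | ax hψ =>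
    obtain rfl | hψ := hψ
    · exact of_tautology hC0 (fun _ => LPlus.pEval_imp.2 id) ⟨hχ, hχ⟩
    · exact mp_tautology hC0 hΓ (ax hψ) ⟨hχ, hΓ _ hψ⟩ fun _ h => LPlus.pEval_imp.2 fun _ => h
  | mp hαβ _ ih ih' =>
    refine mp_tautology₂ hC0 hΓ ih ih' ⟨hχ, (hαβ.inLuniq hins).2⟩ fun val h h' => ?_
    simp only [LPlus.pEval_imp] at *
    tauto

end Provable

section Lindenbaum

variable {S : Signature}

def Avoids (φ : LPlus S) (Δ : Set (LPlus S)) : Prop :=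
  C0Ax S ⊆ Δ ∧ (∀ ψ ∈ Δ, ψ.InLuniq) ∧ ¬ Provable Δ φ

theorem exists_maximal_avoids {Γ : Set (LPlus S)} {φ : LPlus S} (hΓ : Avoids φ Γ) :
    ∃ M, Γ ⊆ M ∧ Maximal (Avoids φ) M := by
  refine zorn_subset_nonempty {Δ | Avoids φ Δ} (fun c hc hchain hne => ?_) Γ hΓ
  obtain ⟨Δ₀, hΔ₀⟩ := hne
  refine ⟨⋃₀ c, ⟨(hc hΔ₀).1.trans (Set.subset_sUnion_of_mem hΔ₀), ?_, ?_⟩,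
    fun _ => Set.subset_sUnion_of_mem⟩
  · rintro ψ ⟨Δ, hΔ, hψ⟩
    exact (hc hΔ).2.1 ψ hψ
  · intro h
    obtain ⟨Δ, hΔ, h⟩ := h.exists_mem_of_sUnion hchain
    exact (hc hΔ).2.2 h

section Maximal

variable {φ : LPlus S} {M : Set (LPlus S)} (hM : Maximal (Avoids φ) M)
include hM

theorem Avoids.provable_imp_of_not_mem {χ : LPlus S} (hχ : χ.InLuniq) (hχM : χ ∉ M) :
    Provable M (χ.imp φ) := by
  obtain ⟨⟨hC0, hMl, -⟩, hmax⟩ := hM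
  refine Provable.deduction hC0 hMl hχ (by_contra fun hnp => hχM ?_)
  exact hmax ⟨hC0.trans (Set.subset_insert _ _), fun ψ hψ => hψ.elim (· ▸ hχ) (hMl ψ), hnp⟩
    (Set.subset_insert _ _) (Set.mem_insert _ _)

theorem Avoids.mem_of_provable {χ : LPlus S} (hχ : χ.InLuniq) (hp : Provable M χ) : χ ∈ M :=
  by_contra fun hχM => hM.1.2.2 (.mp (Avoids.provable_imp_of_not_mem hM hχ hχM) hp)

theorem Avoids.pEval_iff_mem (hφ : φ.InLuniq) {χ : LPlus S} (hχ : χ.InLuniq) :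
    χ.pEval (fun g ψ => LPlus.box g ψ ∈ M) ↔ χ ∈ M := by
  have out := @Avoids.provable_imp_of_not_mem _ _ _ hM
  have cl := @Avoids.mem_of_provable _ _ _ hM
  obtain ⟨⟨hC0, hMl, hMφ⟩, -⟩ := hM
  have taut₁ := @Provable.mp_tautology _ _ hC0 hMl
  have taut₂ := @Provable.mp_tautology₂ _ _ hC0 hMl
  induction χ with
  | box => rfl
  | not χ ih =>
    refine (not_congr (ih hχ)).trans ⟨fun hχM => ?_, fun hnM hχM => ?_⟩
    · by_contra hnM
      exact hMφ (taut₂ (out (χ := χ) hχ hχM) (out hχ hnM) hφ fun _ h h' => by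
        simp only [LPlus.pEval_imp, LPlus.pEval] at h h'; tauto)
    · exact hMφ (taut₂ (.ax hχM) (.ax hnM) hφ fun _ h h' => absurd h h')
  | and χ ψ ih ih' =>
    refine (and_congr (ih hχ.1) (ih' hχ.2)).trans ⟨fun ⟨h, h'⟩ => ?_, fun h => ?_⟩
    · exact cl hχ (taut₂ (.ax h) (.ax h') hχ fun _ h h' => ⟨h, h'⟩)
    · exact ⟨cl hχ.1 (taut₁ (.ax h) hχ.1 fun _ h => h.1),
        cl hχ.2 (taut₁ (.ax h) hχ.2 fun _ h => h.2)⟩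
  | or χ ψ ih ih' =>
    refine (or_congr (ih hχ.1) (ih' hχ.2)).trans ⟨?_, fun h => ?_⟩
    · rintro (h | h)
      · exact cl hχ (taut₁ (.ax h) hχ fun _ h => Or.inl h)
      · exact cl hχ (taut₁ (.ax h) hχ fun _ h => Or.inr h)
    · by_contra hn
      rw [not_or] at hn
      have hor := taut₂ (out hχ.1 hn.1) (out hχ.2 hn.2) (show (LPlus.imp (.or χ ψ) φ).InLuniq
        from ⟨hχ, hφ⟩) fun _ h h' => by simp only [LPlus.pEval_imp, LPlus.pEval] at *; tauto
      exact hMφ (.mp hor (.ax h))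

end Maximal

theorem Provable.of_forall_pEval {Γ : Set (LPlus S)} (hC0 : C0Ax S ⊆ Γ)
    (hΓ : ∀ ψ ∈ Γ, ψ.InLuniq) {φ : LPlus S} (hφ : φ.InLuniq)
    (h : ∀ val, (∀ ψ ∈ Γ, ψ.pEval val) → φ.pEval val) : Provable Γ φ := by
  by_contra hnp
  obtain ⟨M, hΓM, hM⟩ := exists_maximal_avoids ⟨hC0, hΓ, hnp⟩
  have truth := fun ψ (hψ : LPlus.InLuniq ψ) => Avoids.pEval_iff_mem hM hφ hψ
  have hφM : φ ∈ M := (truth φ hφ).1 (h _ fun ψ hψ => (truth ψ (hΓ ψ hψ)).2 (hΓM hψ))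
  exact hM.1.2.2 (.ax hφM)

end Lindenbaum

namespace Signature

variable {S : Signature}

theorem intUpdate_eq_update (g : S.Intervention) (W : S.V) (w : S.valV W) :
    intUpdate g W w = Function.update g W (some w) := by
  funext X
  by_cases h : X = W
  · subst h
    simp [intUpdate]
  · simp [intUpdate, h]

theorem intUpdate_self (g : S.Intervention) (W : S.V) (w : S.valV W) :
    intUpdate g W w W = some w := by
  simp [intUpdate_eq_update]

theorem intUpdate_of_ne (g : S.Intervention) {W X : S.V} (w : S.valV W) (h : X ≠ W) :
    intUpdate g W w X = g X := by
  simp [intUpdate_eq_update, h]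

theorem Intervention.eq_of_update_steps {β : Type*} (F : S.Intervention → β)
    {g g' : S.Intervention}
    (step : ∀ h a, (∀ Y, h Y = g Y ∨ h Y = g' Y) → F h = F g →
      F (Function.update h a (g' a)) = F h) : F g' = F g := by
  let patch (s : Finset S.V) : S.Intervention := fun Y => if Y ∈ s then g' Y else g Y
  suffices ∀ s, F (patch s) = F g by simpa [patch] using this Finset.univ
  intro s
  induction s using Finset.induction_on with
  | empty => simp [patch]
  | insert a s _ ih =>
    have : patch (insert a s) = Function.update (patch s) a (g' a) := by
      funext Y
      by_cases hY : Y = a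
      · subst hY
        simp [patch]
      · simp [patch, hY]
    rw [this, step _ _ (fun Y => by by_cases Y ∈ s <;> simp [patch, *]) ih, ih]

def Intervention.allBut (X : S.V) (w : ∀ Y : S.V, Y ≠ X → S.valV Y) : S.Intervention :=
  fun Y => if h : Y = X then none else some (w Y h)

abbrev Response (S : Signature) : Type := S.Intervention → S.Context → S.Assignment

namespace Response

variable (f : S.Response)

def Effective : Prop := ∀ g u X x, g X = some x → f g u X = x

def Compositional : Prop := ∀ g u W, g W = none → f (intUpdate g W (f g u W)) u = f g u

def Affects (Y Z : S.V) : Prop :=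
  Y ≠ Z ∧ ∃ g y u, g Y = none ∧ g Z = none ∧ f (intUpdate g Y y) u Z ≠ f g u Z

def AgreesOnAtoms (val : S.Intervention → IForm S → Prop) : Prop :=
  ∀ g u X x, val g (IForm.atom X u x) ↔ f g u X = x

variable {f : S.Response} {val : S.Intervention → IForm S → Prop}

theorem exists_agreesOnAtoms (h1 : ∀ A ∈ C1Ax S, A.pEval val) (h2 : ∀ A ∈ C2Ax S, A.pEval val) :
    ∃ f : S.Response, f.AgreesOnAtoms val := by
  have hex : ∀ g u X, ∃ x, val g (IForm.atom X u x) := fun g u X => by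
    obtain ⟨x, l, hnd, hmem⟩ :=
      (Set.finite_univ (α := S.valV X)).exists_nodup_cons Set.univ_nonempty
    have := h2 _ ⟨g, X, u, x, l, hnd, fun y => (hmem y).2 trivial, rfl⟩
    simp only [LPlus.pEval_disj, List.mem_cons, List.mem_map, exists_eq_or_imp,
      exists_exists_and_eq_and, LPlus.pEval] at this
    obtain h | ⟨y, -, h⟩ := this
    exacts [⟨x, h⟩, ⟨y, h⟩]
  choose f hf using hex
  refine ⟨f, fun g u X x => ⟨fun h => ?_, fun h => h ▸ hf g u X⟩⟩
  by_contra hne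
  exact LPlus.pEval_imp.1 (h1 _ ⟨g, X, u, _, _, hne, rfl⟩) (hf g u X) h

theorem exists_isAffectsFormula_of_affects {Y Z : S.V} (h : f.Affects Y Z) :
    ∃ φ, IsAffectsFormula S Y Z φ := by
  obtain ⟨hYZ, g, y, u, hgY, hgZ, hne⟩ := h
  exact _root_.exists_isAffectsFormula hYZ ⟨_, g, y, u, _, _, hgY, hgZ, hne.symm, rfl⟩

section AgreesOnAtoms

variable (hf : f.AgreesOnAtoms val)
include hf

theorem pEval_of_mem_C1Ax {A : LPlus S} (hA : A ∈ C1Ax S) : A.pEval val := by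
  obtain ⟨g, X, u, x, x', hne, rfl⟩ := hA
  refine LPlus.pEval_imp.2 fun h h' => hne ?_
  rw [LPlus.pEval, hf _ _ _ _] at h h'
  exact h.symm.trans h'

theorem pEval_of_mem_C2Ax {A : LPlus S} (hA : A ∈ C2Ax S) : A.pEval val := by
  obtain ⟨g, X, u, x, l, -, hcov, rfl⟩ := hA
  simp only [LPlus.pEval_disj, List.mem_cons, List.mem_map, exists_eq_or_imp,
    exists_exists_and_eq_and, LPlus.pEval, hf _ _ _ _]
  simpa [eq_comm] using hcov (f g u X)

theorem pEval_of_mem_C3Ax (hcomp : f.Compositional) {A : LPlus S} (hA : A ∈ C3Ax S) :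
    A.pEval val := by
  obtain ⟨g, W, Y, u, w, y, hgW, -, -, rfl⟩ := hA
  refine LPlus.pEval_imp.2 fun ⟨hW, hY⟩ => ?_
  simp only [LPlus.pEval, hf _ _ _ _] at hW hY ⊢
  rw [← hW, hcomp g u W hgW, hY]

theorem compositional_of_pEval (heff : f.Effective) (h3 : ∀ A ∈ C3Ax S, A.pEval val) :
    f.Compositional := by
  intro g u W hgW
  funext Y
  by_cases hYW : Y = W
  · subst hYW
    exact heff _ _ _ _ (intUpdate_self g Y _)
  cases hgY : g Y with
  | some y => rw [heff _ _ _ _ hgY, heff _ _ _ y (by rw [intUpdate_of_ne g _ hYW, hgY])]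
  | none =>
    have := h3 _ ⟨g, W, Y, u, f g u W, f g u Y, hgW, hgY, Ne.symm hYW, rfl⟩
    simpa only [LPlus.pEval_imp, LPlus.pEval, hf _ _ _ _, and_self, forall_const] using this

theorem pEval_of_mem_C4Ax (heff : f.Effective) {A : LPlus S} (hA : A ∈ C4Ax S) :
    A.pEval val := by
  obtain ⟨g, X, u, x, hgX, rfl⟩ := hA
  exact (hf _ _ _ _).2 (heff _ _ _ _ hgX)

theorem effective_of_pEval (h4 : ∀ A ∈ C4Ax S, A.pEval val) : f.Effective :=
  fun g u X x hgX => (hf _ _ _ _).1 (h4 _ ⟨g, X, u, x, hgX, rfl⟩)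

theorem pEval_isAffectsFormula_iff {Y Z : S.V} {φ : LPlus S} (h : IsAffectsFormula S Y Z φ) :
    φ.pEval val ↔ f.Affects Y Z := by
  rw [h.pEval_iff, Affects, and_iff_right h.1]
  constructor
  · rintro ⟨_, ⟨g, y, u, z, z', hgY, hgZ, hne, rfl⟩, h', h''⟩
    rw [LPlus.pEval, hf _ _ _ _] at h' h''
    exact ⟨g, y, u, hgY, hgZ, by rw [h', h'']; exact hne.symm⟩
  · rintro ⟨g, y, u, hgY, hgZ, hne⟩
    exact ⟨_, ⟨g, y, u, _, _, hgY, hgZ, hne.symm, rfl⟩, (hf _ _ _ _).2 rfl, (hf _ _ _ _).2 rfl⟩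

theorem pEval_of_mem_C6Ax (hacyc : ∀ X, ¬ Relation.TransGen f.Affects X X) {A : LPlus S}
    (hA : A ∈ C6Ax S) : A.pEval val := by
  obtain ⟨k, Xs, A, B, hA, hB, rfl⟩ := hA
  refine LPlus.pEval_imp.2 fun hAs hBv => hacyc (Xs 0) ?_
  rw [LPlus.pEval_conj_ofFn] at hAs
  exact (Relation.transGen_of_chain fun i => (pEval_isAffectsFormula_iff hf (hA i)).1 (hAs i)).tail
    ((pEval_isAffectsFormula_iff hf hB).1 hBv)

theorem acyclic_of_pEval (h6 : ∀ A ∈ C6Ax S, A.pEval val) (X : S.V) :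
    ¬ Relation.TransGen f.Affects X X := by
  intro hX
  obtain ⟨k, Xs, h0, hlast, hchain⟩ := Relation.exists_chain_of_transGen hX
  cases k with
  | zero => exact (hchain 0).1 (h0.trans hlast.symm)
  | succ k =>
    have hedge : ∀ i : Fin (k + 1), f.Affects (Xs i.castSucc.castSucc) (Xs i.succ.castSucc) :=
      fun i => by simpa only [Fin.succ_castSucc] using hchain i.castSucc
    have hback : f.Affects (Xs (Fin.last (k + 1)).castSucc) (Xs (0 : Fin (k + 2)).castSucc) := by
      simpa only [Fin.succ_last, hlast, Fin.castSucc_zero, h0] using hchain (Fin.last (k + 1))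
    choose A hA using fun i => exists_isAffectsFormula_of_affects (hedge i)
    obtain ⟨B, hB⟩ := exists_isAffectsFormula_of_affects hback
    have := h6 _ ⟨k, fun i => Xs i.castSucc, A, B, hA, hB, rfl⟩
    rw [LPlus.pEval_imp, LPlus.pEval_conj_ofFn] at this
    exact this (fun i => (pEval_isAffectsFormula_iff hf (hA i)).2 (hedge i))
      ((pEval_isAffectsFormula_iff hf hB).2 hback)

end AgreesOnAtoms

theorem pEval_of_mem_AXrec (hf : f.AgreesOnAtoms val) (heff : f.Effective)
    (hcomp : f.Compositional) (hacyc : ∀ X, ¬ Relation.TransGen f.Affects X X) {A : LPlus S}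
    (hA : A ∈ AXrec S) : A.pEval val := by
  rcases hA with ((((⟨hA, -⟩ | hA) | hA) | hA) | hA) | hA
  exacts [hA val, pEval_of_mem_C1Ax hf hA, pEval_of_mem_C2Ax hf hA,
    pEval_of_mem_C3Ax hf hcomp hA, pEval_of_mem_C4Ax hf heff hA, pEval_of_mem_C6Ax hf hacyc hA]

theorem exists_of_pEval_AXrec (hval : ∀ A ∈ AXrec S, A.pEval val) :
    ∃ f : S.Response, f.AgreesOnAtoms val ∧ f.Effective ∧ f.Compositional ∧
      ∀ X, ¬ Relation.TransGen f.Affects X X := by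
  obtain ⟨f, hf⟩ := exists_agreesOnAtoms (fun A hA => hval A (.inl (.inl (.inl (.inl (.inr hA))))))
    fun A hA => hval A (.inl (.inl (.inl (.inr hA))))
  have heff := effective_of_pEval hf fun A hA => hval A (.inl (.inr hA))
  exact ⟨f, hf, heff, compositional_of_pEval hf heff fun A hA => hval A (.inl (.inl (.inr hA))),
    acyclic_of_pEval hf fun A hA => hval A (.inr hA)⟩

theorem apply_update_eq_of_not_affects {h : S.Intervention} {a X : S.V} (hX : h X = none)
    (haX : a ≠ X) (hna : ¬ f.Affects a X) (o : Option (S.valV a)) (u : S.Context) :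
    f (Function.update h a o) u X = f h u X := by
  let k := Function.update h a none
  have hk : ∀ o, f (Function.update h a o) u X = f k u X := by
    rintro (_ | y)
    · rfl
    by_contra hne
    refine hna ⟨haX, k, y, u, by simp [k], by simp [k, Ne.symm haX, hX], ?_⟩
    rwa [intUpdate_eq_update, Function.update_idem]
  rw [hk, ← hk (h a), Function.update_eq_self]

end Response

end Signature

namespace CausalModel

variable {S : Signature} (T : CausalModel S)

def RespectsOrder (r : S.V → S.V → Prop) : Prop :=
  ∀ (X : S.V) (u : S.Context) (w w' : ∀ Y : S.V, Y ≠ X → S.valV Y),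
    (∀ (Y : S.V) (h : Y ≠ X), ¬ r X Y → w Y h = w' Y h) → T.F X u w = T.F X u w'

variable {T}

theorem IsSolution.intUpdate_self {g : S.Intervention} {u : S.Context} {v : S.Assignment}
    (hv : T.IsSolution g u v) (W : S.V) : T.IsSolution (intUpdate g W (v W)) u v := by
  intro X
  by_cases hXW : X = W
  · subst hXW
    rw [Signature.intUpdate_self]
    exact ⟨fun x hx => Option.some_inj.1 hx, fun h => absurd h (Option.some_ne_none _)⟩
  · rw [Signature.intUpdate_of_ne g _ hXW]
    exact hv X

section RespectsOrder

variable {r : S.V → S.V → Prop} [IsStrictTotalOrder S.V r] (hT : T.RespectsOrder r)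
include hT

theorem F_eq_of_agree_below {X : S.V} {u : S.Context} {w w' : ∀ Y : S.V, Y ≠ X → S.valV Y}
    (h : ∀ (Y : S.V) (h : Y ≠ X), r Y X → w Y h = w' Y h) : T.F X u w = T.F X u w' := by
  refine hT X u w w' fun Y hY hnr => h Y hY ?_
  obtain h | rfl | h := trichotomous_of r X Y
  exacts [absurd h hnr, absurd rfl hY, h]

theorem IsSolution.eq_of_agree_below {g g' : S.Intervention} {u : S.Context}
    {v v' : S.Assignment} (hv : T.IsSolution g u v) (hv' : T.IsSolution g' u v') (W : S.V)
    (h : ∀ Q, (Q = W ∨ r Q W) → g Q = g' Q) : v W = v' W := by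
  induction W using (Finite.wellFounded_of_trans_of_irrefl r).induction with
  | _ W ih =>
    cases hgW : g W with
    | none =>
      rw [(hv W).2 hgW, (hv' W).2 (h W (.inl rfl) ▸ hgW)]
      refine F_eq_of_agree_below hT fun Q _ hQW => ih Q hQW fun Q' hQ' => h Q' (.inr ?_)
      obtain rfl | hQ' := hQ'
      exacts [hQW, _root_.trans hQ' hQW]
    | some x => rw [(hv W).1 x hgW, (hv' W).1 x (h W (.inl rfl) ▸ hgW)]

theorem exists_isSolution (g : S.Intervention) (u : S.Context) : ∃ v, T.IsSolution g u v := by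
  classical
  let wf := Finite.wellFounded_of_trans_of_irrefl r
  -- the junk values are read only at successors of `X`, which `F_X` ignores
  let v : S.Assignment := wf.fix fun X ih => match g X with
    | some x => x
    | none => T.F X u fun Q _ => if h : r Q X then ih Q h else Classical.arbitrary _
  have hv : ∀ X, v X = match g X with
      | some x => x
      | none => T.F X u fun Q _ => if r Q X then v Q else Classical.arbitrary _ :=
    fun X => wf.fix_eq _ X
  refine ⟨v, fun X => ⟨fun x hx => by rw [hv X, hx], fun hx => ?_⟩⟩
  rw [hv X, hx]
  exact F_eq_of_agree_below hT fun Q _ hQX => if_pos hQX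

end RespectsOrder

theorem Recursive.uniqueSolutions (hT : T.Recursive) : T.UniqueSolutions := by
  obtain ⟨r, _, hT⟩ := hT
  intro g u
  obtain ⟨v, hv⟩ := exists_isSolution hT g u
  exact ⟨v, hv, fun v' hv' => funext fun X => hv'.eq_of_agree_below hT hv X fun _ _ => rfl⟩

namespace UniqueSolutions

variable (hT : T.UniqueSolutions)

noncomputable def solution : S.Response := fun g u => (hT g u).exists.choose

theorem isSolution_solution (g : S.Intervention) (u : S.Context) :
    T.IsSolution g u (hT.solution g u) :=
  (hT g u).exists.choose_spec

theorem eq_solution {g : S.Intervention} {u : S.Context} {v : S.Assignment}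
    (hv : T.IsSolution g u v) : v = hT.solution g u :=
  (hT g u).unique hv (hT.isSolution_solution g u)

theorem agreesOnAtoms : hT.solution.AgreesOnAtoms T.boxSat := by
  intro g u X x
  refine ⟨fun h => h (fun _ => hT.solution g u) ?_, fun h σ hσ => ?_⟩
  · intro u' hu'
    rw [show u' = u from hu']
    exact hT.isSolution_solution g u
  · show σ u X = x
    rw [hT.eq_solution (hσ u rfl), h]

theorem effective : hT.solution.Effective :=
  fun g u X x hgX => ((hT.isSolution_solution g u) X).1 x hgX

theorem compositional : hT.solution.Compositional :=
  fun g u W _ => (hT.eq_solution ((hT.isSolution_solution g u).intUpdate_self W)).symm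

theorem rel_of_affects {r : S.V → S.V → Prop} [IsStrictTotalOrder S.V r]
    (hr : T.RespectsOrder r) {Y Z : S.V} (h : hT.solution.Affects Y Z) : r Y Z := by
  obtain ⟨hYZ, g, y, u, hgY, -, hne⟩ := h
  by_contra hnr
  refine hne ((hT.isSolution_solution _ u).eq_of_agree_below hr (hT.isSolution_solution g u) Z
    fun Q hQ => Signature.intUpdate_of_ne g y ?_)
  rintro rfl
  exact hQ.elim hYZ hnr

end UniqueSolutions

theorem Recursive.sat_of_mem_AXrec (hT : T.Recursive) {A : LPlus S} (hA : A ∈ AXrec S) :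
    A.sat T := by
  obtain ⟨r, hr, hresp⟩ := hT
  have hU := Recursive.uniqueSolutions ⟨r, hr, hresp⟩
  refine LPlus.sat_iff_pEval.2 <| Signature.Response.pEval_of_mem_AXrec hU.agreesOnAtoms
    hU.effective hU.compositional (fun X hX => (irrefl X : ¬ r X X) ?_) hA
  exact Relation.transGen_eq_self (r := r) ▸
    Relation.TransGen.mono (fun _ _ => hU.rel_of_affects hresp) _ _ hX

end CausalModel

theorem sat_of_provable {S : Signature} {φ : LPlus S} (hp : Provable (AXrec S) φ)
    {T : CausalModel S} (hT : T.Recursive) : φ.sat T := by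
  induction hp with
  | ax hA => exact hT.sat_of_mem_AXrec hA
  | mp _ _ ih ih' => exact ih.resolve_left (not_not.2 ih')

namespace Signature.Response

variable {S : Signature} {f : S.Response}

def canonicalModel (f : S.Response) : CausalModel S :=
  ⟨fun X u w => f (Intervention.allBut X w) u X⟩

theorem isSolution_canonicalModel (heff : f.Effective) (hcomp : f.Compositional)
    (g : S.Intervention) (u : S.Context) : (canonicalModel f).IsSolution g u (f g u) := by
  refine fun X => ⟨heff g u X, fun hgX => ?_⟩
  show f g u X = f (Intervention.allBut X fun Y _ => f g u Y) u X
  refine (congrFun (Intervention.eq_of_update_steps (fun h => f h u) fun h a hh ih => ?_) X).symm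
  by_cases ha : h a = Intervention.allBut X (fun Y _ => f g u Y) a
  · rw [← ha, Function.update_eq_self]
  have hga : h a = g a := (hh a).resolve_right ha
  have haX : a ≠ X := by
    rintro rfl
    simp [Intervention.allBut, hga, hgX] at ha
  rw [Intervention.allBut, dif_neg haX] at ha ⊢
  cases hg : g a with
  | some y => exact absurd (by rw [hga, hg, heff g u a y hg]) ha
  | none =>
    rw [← ih, ← intUpdate_eq_update]
    exact hcomp h u a (hga.trans hg)

theorem canonicalModel_respectsOrder {r : S.V → S.V → Prop} [IsStrictTotalOrder S.V r]
    (haff : ∀ Y Z, f.Affects Y Z → r Y Z) : (canonicalModel f).RespectsOrder r := by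
  intro X u w w' hw
  show f (Intervention.allBut X w) u X = f (Intervention.allBut X w') u X
  refine (Intervention.eq_of_update_steps (fun h => f h u X) fun h a hh _ => ?_).symm
  by_cases ha : h a = Intervention.allBut X w' a
  · rw [← ha, Function.update_eq_self]
  have hX : h X = none := by
    rcases hh X with e | e <;> simp [e, Intervention.allBut]
  have haX : a ≠ X := by
    rintro rfl
    simp [Intervention.allBut, hX] at ha
  have hrXa : r X a := by
    by_contra hnr
    apply ha
    rw [(hh a).resolve_right ha]
    simp [Intervention.allBut, haX, hw a haX hnr]
  exact apply_update_eq_of_not_affects hX haX (fun h' => asymm hrXa (haff _ _ h')) _ u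

theorem exists_recursive_agreesOnAtoms (heff : f.Effective) (hcomp : f.Compositional)
    (hacyc : ∀ X, ¬ Relation.TransGen f.Affects X X) :
    ∃ T : CausalModel S, T.Recursive ∧ f.AgreesOnAtoms T.boxSat := by
  obtain ⟨r, hr, haff⟩ := Relation.exists_isStrictTotalOrder_of_acyclic hacyc
  have hT : (canonicalModel f).Recursive := ⟨r, hr, canonicalModel_respectsOrder haff⟩
  have hU := hT.uniqueSolutions
  have : hU.solution = f := funext₂ fun g u =>
    (hU.eq_solution (isSolution_canonicalModel heff hcomp g u)).symm
  have hagree := hU.agreesOnAtoms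
  rw [this] at hagree
  exact ⟨_, hT, hagree⟩

end Signature.Response

theorem exists_recursive_model_of_pEval_AXrec {S : Signature}
    {val : S.Intervention → IForm S → Prop} (hval : ∀ A ∈ AXrec S, A.pEval val) :
    ∃ T : CausalModel S, T.Recursive ∧ ∀ φ : LPlus S, φ.InLuniq → (φ.sat T ↔ φ.pEval val) := by
  obtain ⟨f, hf, heff, hcomp, hacyc⟩ := Signature.Response.exists_of_pEval_AXrec hval
  obtain ⟨T, hT, hTf⟩ := Signature.Response.exists_recursive_agreesOnAtoms heff hcomp hacyc
  exact ⟨T, hT, fun φ hφ => LPlus.sat_iff_pEval.trans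
    (LPlus.pEval_congr (fun g X u x => (hTf g u X x).trans (hf g u X x).symm) hφ)⟩

theorem AXrec_sound_and_complete_general (S : Signature)
    (φ : LPlus S) (hφ : φ.InLuniq) :
    Provable (AXrec S) φ ↔ ∀ T : CausalModel S, T.Recursive → φ.sat T := by
  refine ⟨fun hp T hT => sat_of_provable hp hT, fun hvalid => ?_⟩
  refine Provable.of_forall_pEval C0Ax_subset_AXrec (fun _ => inLuniq_of_mem_AXrec) hφ
    fun val hval => ?_
  obtain ⟨T, hT, hsat⟩ := exists_recursive_model_of_pEval_AXrec hval
  exact (hsat φ hφ).1 (hvalid T hT)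

/-- `AX_rec(S)` is sound and complete for `L_uniq(S)` with respect to
`T_rec(S)`: a formula of `L_uniq(S)` is provable in `AX_rec(S)` iff it is true in
every recursive causal model over `S`. -/
theorem AXrec_sound_and_complete (S : Signature) (hS : S.Standard)
    (φ : LPlus S) (hφ : φ.InLuniq) :
    Provable (AXrec S) φ ↔ ∀ T : CausalModel S, T.Recursive → φ.sat T :=
  AXrec_sound_and_complete_general S φ hφ
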